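/- The ordinary generating function of the sequence h_n (number of words of length n over {A,B,C,D} with no CB-factor) is H(x) = Σ_{n≥0} h_n x^n = 1/(1 − 4x + x²), as an identity of formal power series. -/

import Mathlib

inductive Letter | A | B | C | D
deriving DecidableEq

def NoCB (w : List Letter) : Prop :=
  List.Chain' (fun a b => ¬(a = Letter.C ∧ b = Letter.B)) w

noncomputable def hword (n : ℕ) : ℕ :=
  Nat.card {w : List Letter // w.length = n ∧ NoCB w}

/-!
Prepending a letter to a word of length `n + 1` avoiding the factor `x y` (here `C B`) gives a
word of length `n + 2` avoiding it, except when the letter is `x` and the word starts with `y`.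
Since `y ≠ x`, `y :: t` is good whenever `t` is, so those exceptions are exactly the words
`x :: y :: t` for the `h n` good words `t` of length `n`. Hence
`h (n + 2) + h n = 4 h (n + 1)`, which together with `h 0 = 1`, `h 1 = 4` says
`(1 - 4X + X²) H = 1`.
-/

open Set

section PairFree

open List

variable {α : Type*} (x y : α)

def pairFreeWords (n : ℕ) : Set (List α) :=
  {w | w.length = n ∧ w.IsChain fun a b => ¬(a = x ∧ b = y)}

theorem pairFreeWords_finite [Finite α] (n : ℕ) : (pairFreeWords x y n).Finite :=
  (finite_length_eq α n).subset fun _ hw => hw.1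

theorem pairFreeWords_zero : pairFreeWords x y 0 = {[]} := by
  ext w
  simp +contextual [pairFreeWords, length_eq_zero_iff]

theorem pairFreeWords_one : pairFreeWords x y 1 = range fun a => [a] := by
  ext w
  simp +contextual [pairFreeWords, length_eq_one_iff, eq_comm]

theorem cons_mem_pairFreeWords_succ {a : α} {t : List α} {n : ℕ} :
    a :: t ∈ pairFreeWords x y (n + 1) ↔
      t ∈ pairFreeWords x y n ∧ ¬(a = x ∧ t.head? = some y) := by
  simp only [pairFreeWords, mem_ofPred_eq, length_cons, Nat.add_right_cancel_iff, isChain_cons,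
    Option.mem_def]
  grind

theorem disjoint_pairFreeWords_image_cons_cons (n : ℕ) :
    Disjoint (pairFreeWords x y (n + 2)) ((fun t => x :: y :: t) '' pairFreeWords x y n) := by
  rw [Set.disjoint_right]
  rintro _ ⟨t, -, rfl⟩ ⟨-, hw⟩
  exact (isChain_cons_cons.mp hw).1 ⟨rfl, rfl⟩

variable {x y}

theorem image_cons_prod_pairFreeWords (hxy : x ≠ y) (n : ℕ) :
    (fun p : α × List α => p.1 :: p.2) '' (univ ×ˢ pairFreeWords x y (n + 1)) =
      pairFreeWords x y (n + 2) ∪ (fun t => x :: y :: t) '' pairFreeWords x y n := by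
  ext (_ | ⟨a, t⟩)
  · simp [pairFreeWords]
  simp only [mem_image, mem_prod, mem_univ, true_and, Prod.exists, cons.injEq,
    exists_eq_right_right, exists_eq_right, mem_union, cons_mem_pairFreeWords_succ]
  constructor
  · intro ht
    by_cases hbad : a = x ∧ t.head? = some y
    · obtain ⟨rfl, hhead⟩ := hbad
      obtain ⟨s, rfl⟩ : ∃ s, t = y :: s := ⟨t.tail, (cons_head?_tail hhead).symm⟩
      exact Or.inr ⟨s, ((cons_mem_pairFreeWords_succ _ _).mp ht).1, rfl, rfl⟩
    · exact Or.inl ⟨ht, hbad⟩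
  · rintro (⟨ht, -⟩ | ⟨s, hs, rfl, rfl⟩)
    · exact ht
    · exact (cons_mem_pairFreeWords_succ _ _).mpr ⟨hs, fun h => hxy h.1.symm⟩

theorem ncard_pairFreeWords_add_two [Finite α] (hxy : x ≠ y) (n : ℕ) :
    (pairFreeWords x y (n + 2)).ncard + (pairFreeWords x y n).ncard =
      Nat.card α * (pairFreeWords x y (n + 1)).ncard := by
  have cons_injective : (fun p : α × List α => p.1 :: p.2).Injective := fun p q h => by
    simpa [Prod.ext_iff] using h
  have cons_cons_injective : (fun t : List α => x :: y :: t).Injective := fun s t h => by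
    simpa using h
  calc (pairFreeWords x y (n + 2)).ncard + (pairFreeWords x y n).ncard
      = (pairFreeWords x y (n + 2) ∪ (fun t => x :: y :: t) '' pairFreeWords x y n).ncard := by
        rw [ncard_union_eq (disjoint_pairFreeWords_image_cons_cons x y n)
          (pairFreeWords_finite x y _) ((pairFreeWords_finite x y n).image _),
          ncard_image_of_injective _ cons_cons_injective]
    _ = Nat.card α * (pairFreeWords x y (n + 1)).ncard := by
        rw [← image_cons_prod_pairFreeWords hxy, ncard_image_of_injective _ cons_injective,
          ncard_prod, ncard_univ]

end PairFree

namespace PowerSeries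

variable {R : Type*} [CommRing R]

theorem mk_mul_eq_one_of_linearRecurrence {u : ℕ → R} {p q : R} (h0 : u 0 = 1) (h1 : u 1 = p)
    (hrec : ∀ n, u (n + 2) = p * u (n + 1) - q * u n) :
    mk u * (1 - C p * X + C q * X ^ 2) = 1 := by
  ext (_ | _ | n) <;>
    simp [mul_add, mul_sub, ← mul_assoc, mul_comm _ (C _), coeff_mul_X_pow', h0, h1, hrec]

end PowerSeries

instance : Fintype Letter :=
  ⟨{.A, .B, .C, .D}, by intro x; cases x <;> simp⟩

theorem Letter.card_eq : Nat.card Letter = 4 := by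
  rw [Nat.card_eq_fintype_card]
  rfl

theorem hword_eq_ncard (n : ℕ) : hword n = (pairFreeWords Letter.C Letter.B n).ncard := rfl

theorem hword_zero : hword 0 = 1 := by
  rw [hword_eq_ncard, pairFreeWords_zero, ncard_singleton]

theorem hword_one : hword 1 = 4 := by
  rw [hword_eq_ncard, pairFreeWords_one, ncard_range_of_injective List.singleton_injective,
    Letter.card_eq]

theorem hword_add_two (n : ℕ) : hword (n + 2) + hword n = 4 * hword (n + 1) := by
  simpa only [hword_eq_ncard, Letter.card_eq] using
    ncard_pairFreeWords_add_two (x := Letter.C) (y := Letter.B) (by decide) n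

open PowerSeries in
/-- The ordinary generating function of h_n is 1/(1 - 4x + x²). -/
theorem stmt2 :
    PowerSeries.mk (fun n => (hword n : ℚ)) = (1 - 4 * PowerSeries.X + PowerSeries.X ^ 2)⁻¹ := by
  rw [eq_inv_iff_mul_eq_one (by simp)]
  have hrec (n : ℕ) : (hword (n + 2) : ℚ) = 4 * hword (n + 1) - 1 * hword n := by
    rw [one_mul, eq_sub_iff_add_eq]
    exact_mod_cast hword_add_two n
  have h := mk_mul_eq_one_of_linearRecurrence (u := fun n => (hword n : ℚ))
    (by rw [hword_zero, Nat.cast_one]) (by rw [hword_one, Nat.cast_ofNat]) hrec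
  rwa [map_ofNat, map_one, one_mul] at h
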